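/- For every real λ > 0 and every real x ≥ 0, F(x,λ) < 1. -/

import Mathlib

/-- `f k x = e^x - ∑_{i=0}^{k-1} x^i / i!`. -/
noncomputable def f (k : ℕ) (x : ℝ) : ℝ :=
  Real.exp x - ∑ i ∈ Finset.range k, x ^ i / (Nat.factorial i : ℝ)

/-- The function `F(x, λ)` from the paper. -/
noncomputable def F (x lam : ℝ) : ℝ :=
  (x * lam ^ 5 * f 0 lam / (f 2 lam * f 3 lam) + lam ^ 4 * f 0 lam / (f 2 lam) ^ 2) /
    (x * lam * f 2 lam / f 3 lam + lam * f 1 lam / f 2 lam) ^ 2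

/-- auxiliary function for the key inequality -/
noncomputable def Haux (t : ℝ) : ℝ :=
  4 * (t - 1) * Real.exp t + 8 - 4 * t ^ 2 - t ^ 4 - 4 * (1 + t) * Real.exp (-t)

lemma cosh_aux {t : ℝ} (ht : 0 < t) : t ^ 2 < Real.exp t + Real.exp (-t) - 2 := by
  have h1 : t / 2 < Real.sinh (t / 2) := (Real.self_lt_sinh_iff).2 (by linarith)
  have h2 : Real.sinh (t / 2) = (Real.exp (t / 2) - Real.exp (-(t / 2))) / 2 :=
    Real.sinh_eq _
  have h3 : t < Real.exp (t / 2) - Real.exp (-(t / 2)) := by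
    rw [h2] at h1; linarith
  have h4 : Real.exp (t / 2) * Real.exp (t / 2) = Real.exp t := by
    rw [← Real.exp_add]; ring_nf
  have h5 : Real.exp (-(t / 2)) * Real.exp (-(t / 2)) = Real.exp (-t) := by
    rw [← Real.exp_add]; ring_nf
  have h6 : Real.exp (t / 2) * Real.exp (-(t / 2)) = 1 := by
    rw [← Real.exp_add]; simp
  nlinarith [h3, h4, h5, h6, ht]

lemma hasDerivAt_Haux (t : ℝ) :
    HasDerivAt Haux (4 * t * (Real.exp t + Real.exp (-t) - 2 - t ^ 2)) t := by
  have h1 : HasDerivAt (fun t : ℝ => Real.exp t) (Real.exp t) t := Real.hasDerivAt_exp t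
  have h2 : HasDerivAt (fun t : ℝ => Real.exp (-t)) (-Real.exp (-t)) t := by
    simpa [Function.comp_def] using (Real.hasDerivAt_exp (-t)).comp t ((hasDerivAt_id t).neg)
  have h3 : HasDerivAt (fun t : ℝ => 4 * (t - 1) * Real.exp t)
      (4 * Real.exp t + 4 * (t - 1) * Real.exp t) t := by
    have := (((hasDerivAt_id t).sub_const 1).const_mul 4).mul h1
    exact this.congr_deriv (by simp)
  have h4 : HasDerivAt (fun t : ℝ => 4 * (1 + t) * Real.exp (-t))
      (4 * Real.exp (-t) + 4 * (1 + t) * (-Real.exp (-t))) t := by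
    have := (((hasDerivAt_id t).const_add 1).const_mul 4).mul h2
    exact this.congr_deriv (by simp)
  have h5 : HasDerivAt (fun t : ℝ => 4 * t ^ 2) (8 * t) t := by
    have := (hasDerivAt_pow 2 t).const_mul (4 : ℝ)
    simpa using this.congr_deriv (by ring)
  have h6 : HasDerivAt (fun t : ℝ => t ^ 4) (4 * t ^ 3) t := by
    simpa using hasDerivAt_pow 4 t
  have : HasDerivAt Haux
      ((4 * Real.exp t + 4 * (t - 1) * Real.exp t) - 8 * t - 4 * t ^ 3
        - (4 * Real.exp (-t) + 4 * (1 + t) * (-Real.exp (-t)))) t := by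
    unfold Haux
    exact ((((h3.add_const 8).sub h5).sub h6).sub h4)
  exact this.congr_deriv (by ring)

lemma Haux_pos {t : ℝ} (ht : 0 < t) : 0 < Haux t := by
  have hmono : StrictMonoOn Haux (Set.Ici (0 : ℝ)) := by
    apply strictMonoOn_of_deriv_pos (convex_Ici 0)
    · exact Continuous.continuousOn (by
        unfold Haux
        continuity)
    · intro x hx
      rw [interior_Ici] at hx
      rw [(hasDerivAt_Haux x).deriv]
      have hc := cosh_aux hx
      have hx0 : 0 < x := hx
      nlinarith [hc, hx0]
  have h0 : Haux 0 = 0 := by unfold Haux; norm_num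
  have := hmono (Set.self_mem_Ici) (Set.mem_Ici.2 (le_of_lt ht)) ht
  linarith [this, h0.symm ▸ this]

lemma key_ineq {lam : ℝ} (hlam : 0 < lam) :
    lam ^ 4 * Real.exp lam <
      4 * (Real.exp lam - 1 - lam) * ((lam - 1) * Real.exp lam + 1) := by
  have hH := Haux_pos hlam
  have hE : 0 < Real.exp lam := Real.exp_pos lam
  have hEE : Real.exp (-lam) * Real.exp lam = 1 := by
    rw [← Real.exp_add]; simp
  have hprod : 0 < Haux lam * Real.exp lam := mul_pos hH hE
  have heq : Haux lam * Real.exp lam =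
      4 * (lam - 1) * Real.exp lam ^ 2 + (8 - 4 * lam ^ 2 - lam ^ 4) * Real.exp lam
        - 4 * (1 + lam) := by
    unfold Haux
    linear_combination (-4 * (1 + lam)) * hEE
  rw [heq] at hprod
  nlinarith [hprod]

lemma quad_pos {a b c E lam x : ℝ} (ha : 0 < a) (hb : 0 < b) (hE : 0 < E)
    (hlam : 0 < lam) (hx : 0 ≤ x) (key : lam ^ 4 * E < 4 * a * (lam * c - a)) :
    lam ^ 2 * E * b * (x * lam * a + b) < (x * a ^ 2 + c * b) ^ 2 := by
  nlinarith [sq_nonneg (2 * a ^ 3 * x + b * (2 * a * c - lam ^ 3 * E)),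
    mul_pos (mul_pos (mul_pos (mul_pos hb hb) (mul_pos hlam hlam)) hE)
      (sub_pos.2 key), mul_pos ha ha]

/-- For every real `λ > 0` and every real `x ≥ 0`, `F(x, λ) < 1`. -/
theorem F_lt_one (lam x : ℝ) (hlam : 0 < lam) (hx : 0 ≤ x) : F x lam < 1 := by
  have hE : 0 < Real.exp lam := Real.exp_pos lam
  set E := Real.exp lam with hEdef
  -- the sums
  have hf0 : f 0 lam = E := by simp [f, hEdef]
  have hf1 : f 1 lam = E - 1 := by
    simp [f, Finset.sum_range_succ, hEdef]
  have hf2 : f 2 lam = E - (1 + lam) := by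
    simp [f, Finset.sum_range_succ]
    try ring
  have hf3 : f 3 lam = E - (1 + lam + lam ^ 2 / 2) := by
    simp [f, Finset.sum_range_succ, Nat.factorial]
    try ring
  set a : ℝ := E - (1 + lam) with hadef
  set b : ℝ := E - (1 + lam + lam ^ 2 / 2) with hbdef
  set c : ℝ := E - 1 with hcdef
  -- positivity
  have hsum3 : (1 : ℝ) + lam + lam ^ 2 / 2 + lam ^ 3 / 6 ≤ E := by
    have := Real.sum_le_exp_of_nonneg (le_of_lt hlam) 4
    simp [Finset.sum_range_succ, Nat.factorial] at this
    rw [hEdef]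
    linarith [this]
  have ha : 0 < a := by
    have : 0 < lam ^ 2 / 2 + lam ^ 3 / 6 := by positivity
    rw [hadef]; linarith
  have hb : 0 < b := by
    have : 0 < lam ^ 3 / 6 := by positivity
    rw [hbdef]; linarith
  have hc : 0 < c := by
    rw [hcdef]; nlinarith [hsum3, sq_nonneg lam]
  -- key inequality
  have key : lam ^ 4 * E < 4 * a * (lam * c - a) := by
    have := key_ineq hlam
    rw [hadef, hcdef]
    calc lam ^ 4 * E < 4 * (E - 1 - lam) * ((lam - 1) * E + 1) := this
      _ = 4 * (E - (1 + lam)) * (lam * (E - 1) - (E - (1 + lam))) := by ring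
  have hq := quad_pos ha hb hE hlam hx key
  -- rewrite F
  have hFeq : F x lam =
      (x * lam ^ 5 * E / (a * b) + lam ^ 4 * E / a ^ 2) /
        (x * lam * a / b + lam * c / a) ^ 2 := by
    rw [F, hf0, hf1, hf2, hf3]
  rw [hFeq]
  have hden : 0 < x * lam * a / b + lam * c / a := by
    have h1 : 0 ≤ x * lam * a / b := by positivity
    have h2 : 0 < lam * c / a := by positivity
    linarith
  rw [div_lt_one (by positivity)]
  have hnum_eq : x * lam ^ 5 * E / (a * b) + lam ^ 4 * E / a ^ 2 =
      lam ^ 4 * E * (x * lam * a + b) / (a ^ 2 * b) := by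
    field_simp
  have hden_eq : (x * lam * a / b + lam * c / a) ^ 2 =
      lam ^ 2 * (x * a ^ 2 + c * b) ^ 2 / (a ^ 2 * b ^ 2) := by
    field_simp
  rw [hnum_eq, hden_eq]
  rw [div_lt_div_iff₀ (by positivity) (by positivity)]
  calc lam ^ 4 * E * (x * lam * a + b) * (a ^ 2 * b ^ 2)
      = (lam ^ 2 * E * b * (x * lam * a + b)) * (lam ^ 2 * a ^ 2 * b) := by ring
    _ < (x * a ^ 2 + c * b) ^ 2 * (lam ^ 2 * a ^ 2 * b) := by
        apply mul_lt_mul_of_pos_right hq (by positivity)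
    _ = lam ^ 2 * (x * a ^ 2 + c * b) ^ 2 * (a ^ 2 * b) := by ring
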